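/- arXiv:2201.11026 — 2 statements merged into one kernel-verified Lean document; each statement's English description precedes it below -/
import Mathlib

section
/- Let f(x₀,x₁,x₂) = a₀x₀ + a₁x₁ + a₂x₂ + a₅x₀x₂ + a₇x₁x₂ + a₈x₂² + x₀³ + x₁³ + x₀x₁x₂ with a₈ ≠ 0. Then for every t ∈ ℂ, the projective closure of the fiber {f = t} in ℙ³ is smooth at every point of the hyperplane at infinity {x₃ = 0}. -/
/-! On `x₃ = 0` the gradient of `F - t x₃³` is the gradient of the top part `x₀³ + x₁³ + x₀x₁x₂`
together with `∂₃ = x₂ (a₅x₀ + a₇x₁ + a₈x₂)`. The first vanishes only where `x₀ = x₁ = 0`, and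
there the second is `a₈x₂² ≠ 0`. -/

open MvPolynomial

/-- Homogenization of `f = a₀x₀ + a₁x₁ + a₂x₂ + a₅x₀x₂ + a₇x₁x₂ + a₈x₂² + x₀³ + x₁³ + x₀x₁x₂`
(nodal cubic top part). -/
noncomputable def Fnodal (a0 a1 a2 a5 a7 a8 : ℂ) : MvPolynomial (Fin 4) ℂ :=
  C a0 * X 0 * X 3 ^ 2 + C a1 * X 1 * X 3 ^ 2 + C a2 * X 2 * X 3 ^ 2 +
    X 3 * (C a5 * X 0 * X 2 + C a7 * X 1 * X 2 + C a8 * X 2 ^ 2) +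
    X 0 ^ 3 + X 1 ^ 3 + X 0 * X 1 * X 2

-- The hypotheses say that `(x, y, z)` is a critical point of `x³ + y³ + xyz`.
theorem nodal_cubic_critical {R : Type*} [CommRing R] [IsDomain R] [NeZero (3 : R)]
    {x y z : R} (hx : 3 * x ^ 2 + y * z = 0) (hy : 3 * y ^ 2 + x * z = 0) (hxy : x * y = 0) :
    x = 0 ∧ y = 0 := by
  rcases mul_eq_zero.1 hxy with rfl | rfl
  · simpa [three_ne_zero] using hy
  · simpa [three_ne_zero] using hx

section GradientAtInfinity

variable (a0 a1 a2 a5 a7 a8 t : ℂ) {p : Fin 4 → ℂ} (hp : p 3 = 0)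
include hp

theorem eval_pderiv_zero_Fnodal_sub_of_eq_zero :
    eval p (pderiv 0 (Fnodal a0 a1 a2 a5 a7 a8 - C t * X 3 ^ 3)) = 3 * p 0 ^ 2 + p 1 * p 2 := by
  simp [Fnodal, hp]
  ring

theorem eval_pderiv_one_Fnodal_sub_of_eq_zero :
    eval p (pderiv 1 (Fnodal a0 a1 a2 a5 a7 a8 - C t * X 3 ^ 3)) = 3 * p 1 ^ 2 + p 0 * p 2 := by
  simp [Fnodal, hp]
  ring

theorem eval_pderiv_two_Fnodal_sub_of_eq_zero :
    eval p (pderiv 2 (Fnodal a0 a1 a2 a5 a7 a8 - C t * X 3 ^ 3)) = p 0 * p 1 := by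
  simp [Fnodal, hp]

theorem eval_pderiv_three_Fnodal_sub_of_eq_zero :
    eval p (pderiv 3 (Fnodal a0 a1 a2 a5 a7 a8 - C t * X 3 ^ 3)) =
      a5 * p 0 * p 2 + a7 * p 1 * p 2 + a8 * p 2 ^ 2 := by
  simp [Fnodal, hp]

end GradientAtInfinity

/-- If `a₈ ≠ 0`, the projective closure of every fiber `{f = t}` is smooth at every
point of the hyperplane at infinity `{x₃ = 0}`: the gradient of `F - t x₃³` does not
vanish at any point of the surface lying at infinity. -/
theorem nodal_smooth_at_infinity (a0 a1 a2 a5 a7 a8 : ℂ) (h8 : a8 ≠ 0) :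
    ∀ t : ℂ, ∀ p : Fin 4 → ℂ, p ≠ 0 → p 3 = 0 →
      eval p (Fnodal a0 a1 a2 a5 a7 a8 - C t * X 3 ^ 3) = 0 →
      ∃ i : Fin 4, eval p (pderiv i (Fnodal a0 a1 a2 a5 a7 a8 - C t * X 3 ^ 3)) ≠ 0 := by
  intro t p hp h3 _
  by_contra! hsing
  obtain ⟨h0, h1⟩ := nodal_cubic_critical
    (eval_pderiv_zero_Fnodal_sub_of_eq_zero a0 a1 a2 a5 a7 a8 t h3 ▸ hsing 0)
    (eval_pderiv_one_Fnodal_sub_of_eq_zero a0 a1 a2 a5 a7 a8 t h3 ▸ hsing 1)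
    (eval_pderiv_two_Fnodal_sub_of_eq_zero a0 a1 a2 a5 a7 a8 t h3 ▸ hsing 2)
  have h2 : p 2 ≠ 0 := fun h2 ↦ hp <| funext fun i ↦ by fin_cases i <;> assumption
  have hd3 := eval_pderiv_three_Fnodal_sub_of_eq_zero a0 a1 a2 a5 a7 a8 t h3 ▸ hsing 3
  have ha8 : a8 * p 2 ^ 2 = 0 := by simpa [h0, h1] using hd3
  exact h8 ((mul_eq_zero.1 ha8).resolve_right (pow_ne_zero 2 h2))
end

section
/- Let g(x₁,x₂,x₃) = x₁² - (a₁²/4)x₃⁴ + x₃·q(x₂,x₃) where q(x₂,x₃) = a₂x₂x₃ + a₈x₂² - t x₃², with a₈ ≠ 0 and a₁ ≠ 0. If -4a₈t - a₂² ≠ 0 then g has Milnor number 4 at the origin (type D₄), and if -4a₈t - a₂² = 0 then g has Milnor number 5 at the origin (type D₅). -/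
open MvPolynomial

/-!
The partial derivatives of `g` are `2x₁`, `2a₈u` and `a₈B + 2a₂u`, where `u = x₂x₃ + c₂x₃²` and
`B = x₂² - c x₃² - c₃x₃³` with `2a₈c₂ = a₂`, `3t = a₈c - 2a₂c₂`, `a₈c₃ = a₁²`; so the Jacobian ideal
is `(x₁, u, B)`. Since `(x₂ - c₂x₃)u - x₃B = x₃³((c - c₂²) + c₃x₃)` and
`4a₈²(c - c₂²) = -3(-4a₈t - a₂²)`, the ideal contains `x₃³` when the discriminant is nonzero and
`x₃⁴` (as `c₃ ≠ 0`) when it vanishes. Modulo the ideal, `1, x₂, x₃, x₃²` (resp. `…, x₃³`) is then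
closed under multiplication by the variables, hence spans; linear forms in the low-degree
coefficients that vanish on the ideal show that it is independent.
-/

/-- `g = x₁² - (a₁²/4)x₃⁴ + x₃·(a₂x₂x₃ + a₈x₂² - t x₃²)` in the variables
`(x₁, x₂, x₃)` with indices `(0, 1, 2)`. -/
noncomputable def gDL (a1 a2 a8 t : ℂ) : MvPolynomial (Fin 3) ℂ :=
  X 0 ^ 2 - C (a1 ^ 2 / 4) * X 2 ^ 4 +
    X 2 * (C a2 * X 1 * X 2 + C a8 * X 1 ^ 2 - C t * X 2 ^ 2)

/-- The local Milnor number at the origin: dimension of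
`ℂ[[x₁,x₂,x₃]] / (∂g/∂x₁, ∂g/∂x₂, ∂g/∂x₃)`. -/
noncomputable def milnorAtOrigin (g : MvPolynomial (Fin 3) ℂ) : ℕ :=
  Module.finrank ℂ
    (MvPowerSeries (Fin 3) ℂ ⧸
      Ideal.span (Set.range fun i : Fin 3 =>
        ((pderiv i g : MvPolynomial (Fin 3) ℂ) : MvPowerSeries (Fin 3) ℂ)))

theorem LinearMap.map_sum_smul_of_eq_single {K M : Type*} [CommSemiring K] [AddCommMonoid M]
    [Module K M] {n : ℕ} (φ : M →ₗ[K] Fin n → K) {b : Fin n → M}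
    (hφb : ∀ j, φ (b j) = Pi.single j 1) (v : Fin n → K) : φ (∑ j, v j • b j) = v := by
  ext i
  simp [hφb, Pi.single_apply]

theorem LinearMap.map_eq_zero_of_mem_ideal_span {K R V : Type*} [CommSemiring K]
    [CommSemiring R] [Algebra K R] [AddCommMonoid V] [Module K V] (φ : R →ₗ[K] V) {s : Set R}
    (h : ∀ g ∈ s, ∀ w, φ (w * g) = 0) {f : R} (hf : f ∈ Ideal.span s) : φ f = 0 := by
  suffices ∀ w, φ (w * f) = 0 by simpa using this 1
  induction hf using Submodule.span_induction with
  | mem g hg => exact h g hg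
  | zero => simp
  | add f g _ _ hf hg => intro w; rw [mul_add, map_add, hf, hg, add_zero]
  | smul r f _ hf => intro w; rw [smul_eq_mul, ← mul_assoc]; exact hf _

theorem Ideal.mem_of_mkₐ_mem_span_of_map_eq_zero {K R : Type*} [CommRing K] [CommRing R]
    [Algebra K R] {I : Ideal R} {n : ℕ} {b : Fin n → R} {φ : R →ₗ[K] Fin n → K}
    (hφI : ∀ f ∈ I, φ f = 0) (hφb : ∀ j, φ (b j) = Pi.single j 1) {f : R}
    (hfS : Ideal.Quotient.mkₐ K I f ∈ Submodule.span K (Set.range (Ideal.Quotient.mkₐ K I ∘ b)))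
    (hf : φ f = 0) : f ∈ I := by
  obtain ⟨v, hv⟩ := (Submodule.mem_span_range_iff_exists_fun K).1 hfS
  have hdiff : f - ∑ j, v j • b j ∈ I := by
    rw [← Ideal.Quotient.eq, ← Ideal.Quotient.mkₐ_eq_mk K, ← hv, map_sum]
    simp only [map_smul, Function.comp_apply]
  have hv0 : v = 0 := by
    have := hφI _ hdiff
    rwa [map_sub, hf, φ.map_sum_smul_of_eq_single hφb, zero_sub, neg_eq_zero] at this
  simpa [hv0] using hdiff

namespace MvPowerSeries

variable {σ R : Type*} [CommSemiring R]

theorem mem_ideal_of_coeff_eq_zero_of_degree_lt [Finite σ] {I : Ideal (MvPowerSeries σ R)}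
    {N : ℕ} (hI : ∀ e : σ →₀ ℕ, e.degree = N → monomial e (1 : R) ∈ I)
    {f : MvPowerSeries σ R} (hf : ∀ d : σ →₀ ℕ, d.degree < N → coeff d f = 0) : f ∈ I := by
  classical
  choose p hp using fun d : σ →₀ ℕ =>
    if h : N ≤ d.degree then (Finsupp.exists_le_degree_eq d N h).imp fun _ he _ => he
    else ⟨0, fun h' => absurd h' h⟩
  -- `g e` collects the terms of `f` whose chosen degree-`N` divisor is `X ^ e`
  let g (e : σ →₀ ℕ) : MvPowerSeries σ R := fun d => if p (d + e) = e then coeff (d + e) f else 0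
  have hg {e d : σ →₀ ℕ} (he : e ≤ d) : coeff (d - e) (g e) = if p d = e then coeff d f else 0 := by
    change (if p (d - e + e) = e then coeff (d - e + e) f else 0) = _
    rw [tsub_add_cancel_of_le he]
  have hsum : f = ∑ e ∈ (Finsupp.finite_of_degree_eq (σ := σ) N).toFinset, monomial e 1 * g e := by
    ext d
    simp only [map_sum, coeff_monomial_mul, one_mul]
    by_cases hd : N ≤ d.degree
    · obtain ⟨hle, hdeg⟩ := hp d hd
      rw [Finset.sum_eq_single (p d), if_pos hle, hg hle, if_pos rfl]
      · intro e _ hne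
        split_ifs with he
        · rw [hg he, if_neg hne.symm]
        · rfl
      · simp [hdeg]
    · rw [hf d (not_le.1 hd)]
      refine (Finset.sum_eq_zero fun e _ => ?_).symm
      split_ifs with he
      · rw [hg he, hf d (not_le.1 hd), ite_self]
      · rfl
  rw [hsum]
  exact Ideal.sum_mem _ fun e he => Ideal.mul_mem_right _ _ (hI e (by simpa using he))

section CommRing

variable {K : Type*} [CommRing K] {I : Ideal (MvPowerSeries σ K)}

theorem quotient_mk_C (a : K) : Ideal.Quotient.mk I (C a) = algebraMap K _ a := by
  rw [← Ideal.Quotient.mk_algebraMap, algebraMap_apply, Algebra.algebraMap_self_apply]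

theorem mkₐ_coe_mem_span_of_mulTable {n : ℕ} (b : Fin n → MvPowerSeries σ K)
    (A : σ → Fin n → Fin n → K) (h1 : 1 ∈ Set.range b)
    (hA : ∀ i j, X i * b j - ∑ k, A i j k • b k ∈ I) (p : MvPolynomial σ K) :
    Ideal.Quotient.mkₐ K I (p : MvPowerSeries σ K) ∈
      Submodule.span K (Set.range (Ideal.Quotient.mkₐ K I ∘ b)) := by
  set S := Submodule.span K (Set.range (Ideal.Quotient.mkₐ K I ∘ b))
  have hS (i : σ) {s} (hs : s ∈ S) : Ideal.Quotient.mkₐ K I (X i) * s ∈ S := by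
    induction hs using Submodule.span_induction with
    | mem s hs =>
      obtain ⟨j, rfl⟩ := hs
      have hj := Ideal.Quotient.eq.2 (hA i j)
      rw [← Ideal.Quotient.mkₐ_eq_mk K] at hj
      rw [Function.comp_apply, ← map_mul, hj, map_sum]
      exact S.sum_mem fun k _ => by
        rw [map_smul]; exact S.smul_mem _ (Submodule.subset_span ⟨k, rfl⟩)
    | zero => simp
    | add s t _ _ hs ht => rw [mul_add]; exact S.add_mem hs ht
    | smul a s _ hs => rw [mul_smul_comm]; exact S.smul_mem a hs
  induction p using MvPolynomial.induction_on with
  | C a =>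
    obtain ⟨j, hj⟩ := h1
    rw [MvPolynomial.coe_C, ← mul_one (MvPowerSeries.C a), ← smul_eq_C_mul, map_smul, ← hj]
    exact S.smul_mem a (Submodule.subset_span ⟨j, rfl⟩)
  | add p q hp hq => rw [MvPolynomial.coe_add, map_add]; exact S.add_mem hp hq
  | mul_X p i hp =>
    rw [MvPolynomial.coe_mul, MvPolynomial.coe_X, map_mul, mul_comm]
    exact hS i hp

/- `hA` makes the `b j` span every polynomial modulo `I`; `hφ_low` and `hφb` then put the
monomials of degree `N`, hence the tails of all power series, into `I`. -/
theorem finrank_quotient_eq_of_normalForm [Finite σ] [Nontrivial K] {n N : ℕ} (b : Fin n → MvPowerSeries σ K)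
    (φ : MvPowerSeries σ K →ₗ[K] Fin n → K) (hφI : ∀ f ∈ I, φ f = 0)
    (hφb : ∀ j, φ (b j) = Pi.single j 1)
    (hφ_low : ∀ f, (∀ d : σ →₀ ℕ, d.degree < N → coeff d f = 0) → φ f = 0)
    (A : σ → Fin n → Fin n → K) (h1 : 1 ∈ Set.range b)
    (hA : ∀ i j, X i * b j - ∑ k, A i j k • b k ∈ I) :
    Module.finrank K (MvPowerSeries σ K ⧸ I) = n := by
  have hpoly := mkₐ_coe_mem_span_of_mulTable b A h1 hA
  have hmono (e : σ →₀ ℕ) (he : e.degree = N) : monomial e (1 : K) ∈ I := by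
    classical
    refine Ideal.mem_of_mkₐ_mem_span_of_map_eq_zero hφI hφb
      (by simpa using hpoly (MvPolynomial.monomial e 1)) (hφ_low _ fun d hd => ?_)
    rw [coeff_monomial, if_neg (by rintro rfl; omega)]
  have htail (f : MvPowerSeries σ K) : f - (truncTotal N f : MvPowerSeries σ K) ∈ I := by
    refine mem_ideal_of_coeff_eq_zero_of_degree_lt hmono fun d hd => ?_
    rw [map_sub, MvPolynomial.coeff_coe, coeff_truncTotal _ hd, sub_self]
  have hker : LinearMap.ker φ = I.restrictScalars K := by
    ext f
    refine ⟨fun hf => ?_, hφI f⟩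
    have htrunc : (truncTotal N f : MvPowerSeries σ K) ∈ I := by
      refine Ideal.mem_of_mkₐ_mem_span_of_map_eq_zero hφI hφb (hpoly _) ?_
      have := hφI _ (htail f)
      rwa [map_sub, LinearMap.mem_ker.1 hf, zero_sub, neg_eq_zero] at this
    simpa using I.add_mem (htail f) htrunc
  have hsurj : Function.Surjective φ := fun v => ⟨_, φ.map_sum_smul_of_eq_single hφb v⟩
  calc Module.finrank K (MvPowerSeries σ K ⧸ I)
      = Module.finrank K (MvPowerSeries σ K ⧸ I.restrictScalars K) :=
        (Submodule.Quotient.restrictScalarsEquiv K I).finrank_eq.symm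
    _ = Module.finrank K (Fin n → K) :=
        ((Submodule.quotEquivOfEq _ _ hker.symm).trans
          (φ.quotKerEquivOfSurjective hsurj)).finrank_eq
    _ = n := Module.finrank_fin_fun K

end CommRing

section DType

variable {K : Type*} [Field K]

noncomputable def exp3 (a b c : ℕ) : Fin 3 →₀ ℕ :=
  Finsupp.single 0 a + Finsupp.single 1 b + Finsupp.single 2 c

@[simp] theorem exp3_apply_zero (a b c : ℕ) : exp3 a b c 0 = a := by simp [exp3]
@[simp] theorem exp3_apply_one (a b c : ℕ) : exp3 a b c 1 = b := by simp [exp3]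
@[simp] theorem exp3_apply_two (a b c : ℕ) : exp3 a b c 2 = c := by simp [exp3]

theorem finsupp_ext_iff_fin_three {d e : Fin 3 →₀ ℕ} :
    d = e ↔ d 0 = e 0 ∧ d 1 = e 1 ∧ d 2 = e 2 := by
  refine ⟨by rintro rfl; simp, fun ⟨h0, h1, h2⟩ => ?_⟩
  ext i; fin_cases i <;> assumption

@[simp] theorem exp3_le_exp3 {a b c a' b' c' : ℕ} :
    exp3 a b c ≤ exp3 a' b' c' ↔ a ≤ a' ∧ b ≤ b' ∧ c ≤ c' := by
  simp [Finsupp.le_def, Fin.forall_fin_succ]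

@[simp] theorem exp3_sub_exp3 (a b c a' b' c' : ℕ) :
    exp3 a b c - exp3 a' b' c' = exp3 (a - a') (b - b') (c - c') := by
  simp [finsupp_ext_iff_fin_three]

@[simp] theorem degree_exp3 (a b c : ℕ) : (exp3 a b c).degree = a + b + c := by
  simp [Finsupp.degree_eq_sum, Fin.sum_univ_three]

theorem monomial_exp3 (a b c : ℕ) (r : K) :
    monomial (exp3 a b c) r = C r * X 0 ^ a * X 1 ^ b * X 2 ^ c := by
  rw [X_pow_eq, X_pow_eq, X_pow_eq, ← monomial_zero_eq_C_apply, monomial_mul_monomial,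
    monomial_mul_monomial, monomial_mul_monomial, exp3, zero_add, mul_one, mul_one, mul_one]

noncomputable def dTypeIdeal (c2 c c3 : K) : Ideal (MvPowerSeries (Fin 3) K) :=
  Ideal.span {X 0, X 1 * X 2 + C c2 * X 2 ^ 2, X 1 ^ 2 - C c * X 2 ^ 2 - C c3 * X 2 ^ 3}

variable (c2 c c3 : K)

theorem X_zero_mem_dTypeIdeal : X 0 ∈ dTypeIdeal c2 c c3 := Ideal.subset_span (by simp)

theorem X_one_mul_X_two_add_mem_dTypeIdeal :
    X 1 * X 2 + C c2 * X 2 ^ 2 ∈ dTypeIdeal c2 c c3 := Ideal.subset_span (by simp)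

theorem X_one_sq_sub_mem_dTypeIdeal :
    X 1 ^ 2 - C c * X 2 ^ 2 - C c3 * X 2 ^ 3 ∈ dTypeIdeal c2 c c3 := Ideal.subset_span (by simp)

theorem X_two_pow_three_mul_mem_dTypeIdeal :
    X 2 ^ 3 * (C (c - c2 ^ 2) + C c3 * X 2) ∈ dTypeIdeal c2 c c3 := by
  convert Ideal.sub_mem _
    (Ideal.mul_mem_left _ (X 1 - C c2 * X 2) (X_one_mul_X_two_add_mem_dTypeIdeal c2 c c3))
    (Ideal.mul_mem_left _ (X 2) (X_one_sq_sub_mem_dTypeIdeal c2 c c3)) using 1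
  simp only [map_sub, map_pow]
  ring

variable {c2 c c3}

theorem X_two_pow_three_mem_dTypeIdeal (c3 : K) (h : c ≠ c2 ^ 2) :
    X 2 ^ 3 ∈ dTypeIdeal c2 c c3 := by
  refine (Ideal.mul_unit_mem_iff_mem _ ?_).1 (X_two_pow_three_mul_mem_dTypeIdeal c2 c c3)
  rw [isUnit_iff_constantCoeff]
  simpa [sub_eq_zero] using h

theorem X_two_pow_four_mem_dTypeIdeal (c2 : K) (h3 : c3 ≠ 0) :
    X 2 ^ 4 ∈ dTypeIdeal c2 (c2 ^ 2) c3 := by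
  refine (Ideal.unit_mul_mem_iff_mem _ ((isUnit_iff_ne_zero.2 h3).map C)).1 ?_
  convert X_two_pow_three_mul_mem_dTypeIdeal c2 (c2 ^ 2) c3 using 1
  simp only [sub_self, map_zero, zero_add]
  ring

theorem map_eq_zero_of_mem_dTypeIdeal {V : Type*} [AddCommMonoid V] [Module K V]
    (φ : MvPowerSeries (Fin 3) K →ₗ[K] V) (hx : ∀ w, φ (w * monomial (exp3 1 0 0) 1) = 0)
    (hu : ∀ w, φ (w * (monomial (exp3 0 1 1) 1 + monomial (exp3 0 0 2) c2)) = 0)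
    (hB : ∀ w, φ (w * (monomial (exp3 0 2 0) 1 - monomial (exp3 0 0 2) c -
      monomial (exp3 0 0 3) c3)) = 0) {f : MvPowerSeries (Fin 3) K}
    (hf : f ∈ dTypeIdeal c2 c c3) : φ f = 0 := by
  refine LinearMap.map_eq_zero_of_mem_ideal_span φ ?_ hf
  have ex : X 0 = monomial (exp3 1 0 0) (1 : K) := by simp [monomial_exp3]
  have eu : X 1 * X 2 + C c2 * X 2 ^ 2 = monomial (exp3 0 1 1) 1 + monomial (exp3 0 0 2) c2 := by
    simp [monomial_exp3]
  have eB : X 1 ^ 2 - C c * X 2 ^ 2 - C c3 * X 2 ^ 3 =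
      monomial (exp3 0 2 0) 1 - monomial (exp3 0 0 2) c - monomial (exp3 0 0 3) c3 := by
    simp [monomial_exp3]
  simp only [Set.mem_insert_iff, Set.mem_singleton_iff, forall_eq_or_imp, forall_eq, ex, eu, eB]
  exact ⟨hx, hu, hB⟩

/-- Coordinates of the normal form of `f` modulo `dTypeIdeal c2 c c3` in the basis
`1, x₂, x₃, x₃²`, obtained by reducing with `x₂² ≡ c x₃²` and `x₂x₃ ≡ -c₂x₃²`. -/
noncomputable def coordsD4 (c2 c : K) : MvPowerSeries (Fin 3) K →ₗ[K] Fin 4 → K :=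
  LinearMap.pi ![coeff (exp3 0 0 0), coeff (exp3 0 1 0), coeff (exp3 0 0 1),
    coeff (exp3 0 0 2) + c • coeff (exp3 0 2 0) - c2 • coeff (exp3 0 1 1)]

theorem coordsD4_eq_zero_of_mem {f : MvPowerSeries (Fin 3) K} (hf : f ∈ dTypeIdeal c2 c c3) :
    coordsD4 c2 c f = 0 := by
  refine map_eq_zero_of_mem_dTypeIdeal _ (fun w => ?_) (fun w => ?_) (fun w => ?_) hf
  · ext k; fin_cases k <;> simp [coordsD4, coeff_mul_monomial]
  · ext k
    fin_cases k <;> simp [coordsD4, coeff_mul_monomial, mul_add]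
    ring
  · ext k
    fin_cases k <;> simp [coordsD4, coeff_mul_monomial, mul_sub]
    ring

theorem finrank_quotient_dTypeIdeal_of_ne (h : c ≠ c2 ^ 2) :
    Module.finrank K (MvPowerSeries (Fin 3) K ⧸ dTypeIdeal c2 c c3) = 4 := by
  have hx := Ideal.Quotient.eq_zero_iff_mem.2 (X_zero_mem_dTypeIdeal c2 c c3)
  have hu := Ideal.Quotient.eq_zero_iff_mem.2 (X_one_mul_X_two_add_mem_dTypeIdeal c2 c c3)
  have hB := Ideal.Quotient.eq_zero_iff_mem.2 (X_one_sq_sub_mem_dTypeIdeal c2 c c3)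
  have hz3 := Ideal.Quotient.eq_zero_iff_mem.2 (X_two_pow_three_mem_dTypeIdeal c3 h)
  simp only [map_add, map_sub, map_mul, map_pow, quotient_mk_C] at hu hB hz3
  generalize hY : Ideal.Quotient.mk (dTypeIdeal c2 c c3) (X 1) = Y at hu hB
  generalize hZ : Ideal.Quotient.mk (dTypeIdeal c2 c c3) (X 2) = Z at hu hB hz3
  refine finrank_quotient_eq_of_normalForm (N := 3) ![1, X 1, X 2, X 2 ^ 2] (coordsD4 c2 c)
    (fun f => coordsD4_eq_zero_of_mem) (fun j => ?_) (fun f hf => ?_)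
    ![0, ![![0, 1, 0, 0], ![0, 0, 0, c], ![0, 0, 0, -c2], 0],
      ![![0, 0, 1, 0], ![0, 0, 0, -c2], ![0, 0, 0, 1], 0]] ⟨0, rfl⟩ fun i j => ?_
  · fin_cases j <;> ext k <;> fin_cases k <;>
      simp [coordsD4, coeff_X_pow, coeff_X, coeff_one, finsupp_ext_iff_fin_three]
  · have h' (a b c : ℕ) (habc : a + b + c < 3) : coeff (exp3 a b c) f = 0 := hf _ (by simpa)
    ext k; fin_cases k <;> simp [coordsD4, h']
  · rw [← Ideal.Quotient.eq_zero_iff_mem]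
    fin_cases i <;> fin_cases j <;>
      simp [Fin.sum_univ_four, smul_eq_C_mul, quotient_mk_C, hx, hY, hZ]
    · linear_combination hB + algebraMap K _ c3 * hz3
    · linear_combination hu
    · linear_combination Z * hu - algebraMap K _ c2 * hz3
    · linear_combination hu
    · ring
    · linear_combination hz3

/-- Coordinates of the normal form of `f` modulo `dTypeIdeal c2 (c2 ^ 2) c3` in the basis
`1, x₂, x₃, x₃², x₃³`, obtained by reducing with `x₂² ≡ c₂²x₃² + c₃x₃³` and `x₂x₃ ≡ -c₂x₃²`. -/
noncomputable def coordsD5 (c2 c3 : K) : MvPowerSeries (Fin 3) K →ₗ[K] Fin 5 → K :=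
  LinearMap.pi ![coeff (exp3 0 0 0), coeff (exp3 0 1 0), coeff (exp3 0 0 1),
    coeff (exp3 0 0 2) + c2 ^ 2 • coeff (exp3 0 2 0) - c2 • coeff (exp3 0 1 1),
    coeff (exp3 0 0 3) + c2 ^ 2 • coeff (exp3 0 2 1) + c3 • coeff (exp3 0 2 0) -
      c2 • coeff (exp3 0 1 2) - c2 ^ 3 • coeff (exp3 0 3 0)]

theorem coordsD5_eq_zero_of_mem {f : MvPowerSeries (Fin 3) K}
    (hf : f ∈ dTypeIdeal c2 (c2 ^ 2) c3) : coordsD5 c2 c3 f = 0 := by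
  refine map_eq_zero_of_mem_dTypeIdeal _ (fun w => ?_) (fun w => ?_) (fun w => ?_) hf
  · ext k; fin_cases k <;> simp [coordsD5, coeff_mul_monomial]
  · ext k
    fin_cases k <;> simp [coordsD5, coeff_mul_monomial, mul_add]
    all_goals ring
  · ext k
    fin_cases k <;> simp [coordsD5, coeff_mul_monomial, mul_sub]
    all_goals ring

theorem finrank_quotient_dTypeIdeal_of_eq (h3 : c3 ≠ 0) :
    Module.finrank K (MvPowerSeries (Fin 3) K ⧸ dTypeIdeal c2 (c2 ^ 2) c3) = 5 := by
  have hx := Ideal.Quotient.eq_zero_iff_mem.2 (X_zero_mem_dTypeIdeal c2 (c2 ^ 2) c3)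
  have hu := Ideal.Quotient.eq_zero_iff_mem.2 (X_one_mul_X_two_add_mem_dTypeIdeal c2 (c2 ^ 2) c3)
  have hB := Ideal.Quotient.eq_zero_iff_mem.2 (X_one_sq_sub_mem_dTypeIdeal c2 (c2 ^ 2) c3)
  have hz4 := Ideal.Quotient.eq_zero_iff_mem.2 (X_two_pow_four_mem_dTypeIdeal c2 h3)
  simp only [map_add, map_sub, map_mul, map_pow, quotient_mk_C] at hu hB hz4
  generalize hY : Ideal.Quotient.mk (dTypeIdeal c2 (c2 ^ 2) c3) (X 1) = Y at hu hB
  generalize hZ : Ideal.Quotient.mk (dTypeIdeal c2 (c2 ^ 2) c3) (X 2) = Z at hu hB hz4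
  refine finrank_quotient_eq_of_normalForm (N := 4) ![1, X 1, X 2, X 2 ^ 2, X 2 ^ 3]
    (coordsD5 c2 c3) (fun f => coordsD5_eq_zero_of_mem) (fun j => ?_) (fun f hf => ?_)
    ![0, ![![0, 1, 0, 0, 0], ![0, 0, 0, c2 ^ 2, c3], ![0, 0, 0, -c2, 0], ![0, 0, 0, 0, -c2], 0],
      ![![0, 0, 1, 0, 0], ![0, 0, 0, -c2, 0], ![0, 0, 0, 1, 0], ![0, 0, 0, 0, 1], 0]]
    ⟨0, rfl⟩ fun i j => ?_
  · fin_cases j <;> ext k <;> fin_cases k <;>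
      simp [coordsD5, coeff_X_pow, coeff_X, coeff_one, finsupp_ext_iff_fin_three]
  · have h' (a b c : ℕ) (habc : a + b + c < 4) : coeff (exp3 a b c) f = 0 := hf _ (by simpa)
    ext k; fin_cases k <;> simp [coordsD5, h']
  · rw [← Ideal.Quotient.eq_zero_iff_mem]
    fin_cases i <;> fin_cases j <;>
      simp [Fin.sum_univ_five, smul_eq_C_mul, quotient_mk_C, hx, hY, hZ]
    · linear_combination hB
    · linear_combination hu
    · linear_combination Z * hu
    · linear_combination Z ^ 2 * hu - algebraMap K _ c2 * hz4
    · linear_combination hu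
    · ring
    · ring
    · linear_combination hz4

end DType

end MvPowerSeries

section gDL

variable {a1 a2 a8 t c2 c c3 : ℂ}

theorem pderiv_zero_gDL : pderiv 0 (gDL a1 a2 a8 t) = 2 * X 0 := by simp [gDL]

theorem pderiv_one_gDL (hc2 : a2 = 2 * a8 * c2) :
    pderiv 1 (gDL a1 a2 a8 t) = 2 * C a8 * (X 1 * X 2 + C c2 * X 2 ^ 2) := by
  have ha2 : (C a2 : MvPolynomial (Fin 3) ℂ) = 2 * C a8 * C c2 := by
    simpa [map_ofNat] using congrArg C hc2
  simp [gDL]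
  linear_combination X 2 ^ 2 * ha2

theorem pderiv_two_gDL (hc : 3 * t = a8 * c - 2 * a2 * c2) (hc3 : a1 ^ 2 = a8 * c3) :
    pderiv 2 (gDL a1 a2 a8 t) = C a8 * (X 1 ^ 2 - C c * X 2 ^ 2 - C c3 * X 2 ^ 3) +
      2 * C a2 * (X 1 * X 2 + C c2 * X 2 ^ 2) := by
  have ht : (3 : MvPolynomial (Fin 3) ℂ) * C t = C a8 * C c - 2 * C a2 * C c2 := by
    simpa [map_ofNat] using congrArg C hc
  have ha1 : (C (a1 ^ 2 / 4) : MvPolynomial (Fin 3) ℂ) * 4 = C a8 * C c3 := by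
    rw [← map_ofNat C 4, ← map_mul, ← map_mul, div_mul_cancel₀ _ (by norm_num : (4 : ℂ) ≠ 0), hc3]
  simp [gDL]
  linear_combination (-X 2 ^ 2) * ht - X 2 ^ 3 * ha1

namespace MvPowerSeries

theorem span_coe_pderiv_gDL (h8 : a8 ≠ 0) (hc2 : a2 = 2 * a8 * c2)
    (hc : 3 * t = a8 * c - 2 * a2 * c2) (hc3 : a1 ^ 2 = a8 * c3) :
    Ideal.span (Set.range fun i : Fin 3 =>
      ((MvPolynomial.pderiv i (gDL a1 a2 a8 t) : MvPolynomial (Fin 3) ℂ) :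
        MvPowerSeries (Fin 3) ℂ)) = dTypeIdeal c2 c c3 := by
  set u : MvPowerSeries (Fin 3) ℂ := X 1 * X 2 + C c2 * X 2 ^ 2
  set B : MvPowerSeries (Fin 3) ℂ := X 1 ^ 2 - C c * X 2 ^ 2 - C c3 * X 2 ^ 3
  have hpd : ∀ i, ((MvPolynomial.pderiv i (gDL a1 a2 a8 t) : MvPolynomial (Fin 3) ℂ) :
      MvPowerSeries (Fin 3) ℂ) =
      ![2 * X 0, 2 * C a8 * u, C a8 * B + 2 * C a2 * u] i := by
    intro i
    fin_cases i <;>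
    simp only [Fin.zero_eta, Fin.mk_one, Fin.reduceFinMk, Matrix.cons_val, pderiv_zero_gDL,
      pderiv_one_gDL hc2, pderiv_two_gDL hc hc3, ← coeToMvPowerSeries.ringHom_apply, map_add,
      map_sub, map_mul, map_pow, map_ofNat] <;>
    simp only [coeToMvPowerSeries.ringHom_apply, coe_X, coe_C, u, B]
  have h2 : IsUnit (2 : MvPowerSeries (Fin 3) ℂ) :=
    isUnit_iff_constantCoeff.2 (by rw [map_ofNat]; exact IsUnit.mk0 _ two_ne_zero)
  have h8' : IsUnit (C a8 : MvPowerSeries (Fin 3) ℂ) := (IsUnit.mk0 a8 h8).map C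
  simp only [hpd]
  set J := Ideal.span (Set.range ![2 * X 0, 2 * C a8 * u, C a8 * B + 2 * C a2 * u])
  apply le_antisymm
  · rw [Ideal.span_le, Set.range_subset_iff]
    intro i
    fin_cases i
    · exact Ideal.mul_mem_left _ _ (X_zero_mem_dTypeIdeal c2 c c3)
    · exact Ideal.mul_mem_left _ _ (X_one_mul_X_two_add_mem_dTypeIdeal c2 c c3)
    · exact add_mem (Ideal.mul_mem_left _ _ (X_one_sq_sub_mem_dTypeIdeal c2 c c3))
        (Ideal.mul_mem_left _ _ (X_one_mul_X_two_add_mem_dTypeIdeal c2 c c3))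
  · have hmem (i : Fin 3) : ![2 * X 0, 2 * C a8 * u, C a8 * B + 2 * C a2 * u] i ∈ J :=
      Ideal.subset_span ⟨i, rfl⟩
    have hu : u ∈ J := (Ideal.unit_mul_mem_iff_mem _ (h2.mul h8')).1 (hmem 1)
    have hB : B ∈ J := by
      refine (Ideal.unit_mul_mem_iff_mem _ h8').1 ?_
      rw [← add_sub_cancel_right (C a8 * B) (2 * C a2 * u)]
      exact sub_mem (hmem 2) (Ideal.mul_mem_left _ _ hu)
    rw [dTypeIdeal, Ideal.span_le, Set.insert_subset_iff, Set.insert_subset_iff,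
      Set.singleton_subset_iff]
    exact ⟨(Ideal.unit_mul_mem_iff_mem _ h2).1 (hmem 0), hu, hB⟩

end MvPowerSeries

end gDL

/-- With `a₈ ≠ 0` and `a₁ ≠ 0`: if `-4a₈t - a₂² ≠ 0` then `g` has Milnor number `4`
at the origin (type `D₄`); if `-4a₈t - a₂² = 0` then it has Milnor number `5`
(type `D₅`). -/
theorem gDL_D4_D5 (a1 a2 a8 t : ℂ) (h8 : a8 ≠ 0) (h1 : a1 ≠ 0) :
    (-4 * a8 * t - a2 ^ 2 ≠ 0 → milnorAtOrigin (gDL a1 a2 a8 t) = 4) ∧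
    (-4 * a8 * t - a2 ^ 2 = 0 → milnorAtOrigin (gDL a1 a2 a8 t) = 5) := by
  obtain ⟨c2, hc2⟩ : ∃ c2, a2 = 2 * a8 * c2 := ⟨a2 / (2 * a8), by field_simp⟩
  obtain ⟨c, hc⟩ : ∃ c, 3 * t = a8 * c - 2 * a2 * c2 :=
    ⟨(3 * t + 2 * a2 * c2) / a8, by field_simp; ring⟩
  obtain ⟨c3, hc3⟩ : ∃ c3, a1 ^ 2 = a8 * c3 := ⟨a1 ^ 2 / a8, by field_simp⟩
  have hD : 4 * a8 ^ 2 * (c - c2 ^ 2) = -3 * (-4 * a8 * t - a2 ^ 2) := by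
    linear_combination (-4 * a8) * hc + (-3 * a2 + 2 * a8 * c2) * hc2
  rw [milnorAtOrigin, MvPowerSeries.span_coe_pderiv_gDL h8 hc2 hc hc3]
  refine ⟨fun hne => MvPowerSeries.finrank_quotient_dTypeIdeal_of_ne fun h => hne ?_,
    fun heq => ?_⟩
  · linear_combination hD / 3 - 4 * a8 ^ 2 / 3 * h
  · obtain rfl : c = c2 ^ 2 := by
      have : a8 ^ 2 * (c - c2 ^ 2) = 0 := by linear_combination hD / 4 - 3 / 4 * heq
      simpa [h8, sub_eq_zero] using this
    exact MvPowerSeries.finrank_quotient_dTypeIdeal_of_eq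
      (right_ne_zero_of_mul (hc3 ▸ pow_ne_zero 2 h1))
end
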